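/- arXiv:2604.20883 — 3 statements merged into one kernel-verified Lean document; each statement's English description precedes it below -/
import Mathlib

section
/- For any λ ∈ (0,1), ξ ∈ ℝ and n ∈ ℕ, the product over all k ≥ 0 with k ≠ n of |cos(λᵏ ξ)| is at most |μ̂_{λ³}(ξ)|² + |μ̂_{λ³}(λξ)|² + |μ̂_{λ³}(λ²ξ)|². -/
open MeasureTheory Filter Set

noncomputable section

/-- The sign associated to a boolean: `true ↦ 1`, `false ↦ -1`. -/
def sgn (b : Bool) : ℝ := if b then 1 else -1

/-- `ν` is the (1/2,1/2) i.i.d. Bernoulli measure on `{-1,1}^ℕ` (coded by booleans). -/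
def IsBernoulliMeasure (ν : Measure (ℕ → Bool)) : Prop :=
  IsProbabilityMeasure ν ∧
    ∀ (s : Finset ℕ) (b : ℕ → Bool), ν {a | ∀ i ∈ s, a i = b i} = (1 / 2 : ENNReal) ^ s.card

/-- The random series `X(λ; a) = Σ_{m≥1} a_m λ^{m-1}` (zero-indexed). -/
def X (lam : ℝ) (a : ℕ → Bool) : ℝ := ∑' n : ℕ, sgn (a n) * lam ^ n

/-- The Bernoulli convolution `μ_λ`, the law of `X(λ; ·)`. -/
def bc (ν : Measure (ℕ → Bool)) (lam : ℝ) : Measure ℝ := ν.map (X lam)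

/-- Fourier transform `μ̂(ξ) = ∫ e^{iξx} dμ(x)` of a measure on `ℝ`. -/
def FT (μ : Measure ℝ) (ξ : ℝ) : ℂ := ∫ x, Complex.exp (ξ * x * Complex.I) ∂μ

/-! The Fourier transform of a Bernoulli convolution is the infinite product of cosines
`μ̂_λ(ξ) = ∏ₖ cos(λᵏ ξ)`: the coordinates are independent fair signs, so the partial sums
have characteristic function `∏_{k<N} cos(λᵏ ξ)`, and dominated convergence passes to the limit.
Grouping `k` by its residue mod 3 gives `|μ̂_{λ³}(λʲ ξ)| = ∏_{k ≡ j} |cos(λᵏ ξ)|`. Two residue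
classes `j ≠ j'` avoid `n`, and since all factors lie in `[0, 1]`, the product over `k ≠ n` is at
most the product over these two classes, `|μ̂_{λ³}(λʲ ξ)| |μ̂_{λ³}(λʲ' ξ)|`, which is at most the
sum of the squares. -/

open Topology

theorem abs_sgn (b : Bool) : |sgn b| = 1 := by cases b <;> simp [sgn]

theorem summable_sgn_mul_pow {lam : ℝ} (hlam : |lam| < 1) (a : ℕ → Bool) :
    Summable fun k => sgn (a k) * lam ^ k :=
  .of_norm_bounded (summable_geometric_of_lt_one (abs_nonneg lam) hlam) fun k => by
    rw [Real.norm_eq_abs, abs_mul, abs_sgn, one_mul, abs_pow]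

theorem measurable_sum_sgn_mul (s : Finset ℕ) (c : ℕ → ℝ) :
    Measurable fun a : ℕ → Bool => ∑ k ∈ s, sgn (a k) * c k :=
  Finset.measurable_sum s fun k _ =>
    (measurable_of_countable sgn).comp (measurable_pi_apply k) |>.mul_const _

theorem measurable_X {lam : ℝ} (hlam : |lam| < 1) : Measurable (X lam) :=
  measurable_of_tendsto_metrizable (fun N => measurable_sum_sgn_mul (Finset.range N) (lam ^ ·))
    (tendsto_pi_nhds.2 fun a => (summable_sgn_mul_pow hlam a).hasSum.tendsto_sum_nat)

theorem IsBernoulliMeasure.map_restrict {ν : Measure (ℕ → Bool)} (hν : IsBernoulliMeasure ν)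
    (s : Finset ℕ) :
    ν.map (fun (a : ℕ → Bool) (i : s) => a i) =
      Measure.pi fun _ => (2⁻¹ : NNReal) • Measure.count := by
  classical
  refine Measure.ext_iff_singleton.2 fun b => ?_
  have hpre : (fun (a : ℕ → Bool) (i : s) => a i) ⁻¹' {b} =
      {a | ∀ i ∈ s, a i = if h : i ∈ s then b ⟨i, h⟩ else false} := by
    ext a
    simp +contextual [funext_iff]
  rw [Measure.map_apply (by fun_prop) (measurableSet_singleton b), hpre, hν.2,
    Measure.pi_singleton]
  simp [one_div]

theorem integral_exp_mul_sgn (c : ℝ) :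
    ∫ t, Complex.exp (c * sgn t * Complex.I) ∂((2⁻¹ : NNReal) • Measure.count) =
      (Real.cos c : ℂ) := by
  rw [integral_smul_nnreal_measure, integral_count, Fintype.sum_bool, Complex.ofReal_cos,
    Complex.cos]
  simp [sgn, NNReal.smul_def, Complex.real_smul]
  ring

theorem IsBernoulliMeasure.integral_exp_sum {ν : Measure (ℕ → Bool)}
    (hν : IsBernoulliMeasure ν) (s : Finset ℕ) (c : ℕ → ℝ) :
    ∫ a, Complex.exp (↑(∑ k ∈ s, c k * sgn (a k)) * Complex.I) ∂ν =
      ∏ k ∈ s, (Real.cos (c k) : ℂ) := by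
  have hfactor : ∀ a : ℕ → Bool, Complex.exp (↑(∑ k ∈ s, c k * sgn (a k)) * Complex.I) =
      ∏ i : s, Complex.exp (c i * sgn (a i) * Complex.I) := by
    intro a
    rw [← Complex.exp_sum, Finset.sum_coe_sort s fun k => (c k * sgn (a k) * Complex.I)]
    push_cast
    rw [Finset.sum_mul]
  calc _ = ∫ a, (fun b : s → Bool => ∏ i : s, Complex.exp (c i * sgn (b i) * Complex.I))
          fun i => a i ∂ν := by
        simp_rw [hfactor]
    _ = ∫ b : s → Bool, ∏ i : s, Complex.exp (c i * sgn (b i) * Complex.I)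
          ∂Measure.pi fun _ => (2⁻¹ : NNReal) • Measure.count := by
        rw [← hν.map_restrict, integral_map
          (measurable_pi_lambda _ fun i => measurable_pi_apply _).aemeasurable
          (measurable_of_countable _).aestronglyMeasurable]
    _ = ∏ i : s, (Real.cos (c i) : ℂ) := by
        simp_rw [integral_fintype_prod_eq_prod
          (fun (i : s) (t : Bool) => Complex.exp (c i * sgn t * Complex.I)), integral_exp_mul_sgn]
    _ = _ := Finset.prod_coe_sort s fun k => (Real.cos (c k) : ℂ)

theorem IsBernoulliMeasure.tendsto_prod_cos_FT_bc {ν : Measure (ℕ → Bool)}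
    (hν : IsBernoulliMeasure ν) {lam : ℝ} (hlam : |lam| < 1) (ξ : ℝ) :
    Tendsto (fun N => ∏ k ∈ Finset.range N, (Real.cos (lam ^ k * ξ) : ℂ)) atTop
      (𝓝 (FT (bc ν lam) ξ)) := by
  have : IsProbabilityMeasure ν := hν.1
  have hpartial : ∀ N, ∏ k ∈ Finset.range N, (Real.cos (lam ^ k * ξ) : ℂ) =
      ∫ a, Complex.exp (ξ * ↑(∑ k ∈ Finset.range N, sgn (a k) * lam ^ k) * Complex.I) ∂ν := by
    intro N
    rw [← hν.integral_exp_sum]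
    congr with a
    push_cast
    congr 2
    rw [Finset.mul_sum]
    exact Finset.sum_congr rfl fun k _ => by ring
  simp_rw [hpartial, FT, bc]
  have hcont : Continuous fun x : ℝ => Complex.exp (ξ * x * Complex.I) := by fun_prop
  rw [integral_map (measurable_X hlam).aemeasurable hcont.aestronglyMeasurable]
  refine tendsto_integral_of_dominated_convergence (fun _ => 1) (fun N => ?_) (integrable_const 1)
    (fun N => ae_of_all _ fun a => ?_) (ae_of_all _ fun a => ?_)
  · have := measurable_sum_sgn_mul (Finset.range N) (lam ^ ·)
    exact (by fun_prop : Measurable _).aestronglyMeasurable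
  · rw [← Complex.ofReal_mul, Complex.norm_exp_ofReal_mul_I]
  · exact (hcont.tendsto _).comp (summable_sgn_mul_pow hlam a).hasSum.tendsto_sum_nat

theorem IsBernoulliMeasure.tendsto_prod_abs_cos_norm_FT_bc {ν : Measure (ℕ → Bool)}
    (hν : IsBernoulliMeasure ν) {lam : ℝ} (hlam : |lam| < 1) {p : ℕ} (hp : p ≠ 0) (j : ℕ)
    (ξ : ℝ) :
    Tendsto (fun N => ∏ m ∈ Finset.range N, |Real.cos (lam ^ (p * m + j) * ξ)|) atTop
      (𝓝 ‖FT (bc ν (lam ^ p)) (lam ^ j * ξ)‖) := by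
  have hlam_pow : |lam ^ p| < 1 := by
    rw [abs_pow]
    exact pow_lt_one₀ (abs_nonneg lam) hlam hp
  convert (hν.tendsto_prod_cos_FT_bc hlam_pow (lam ^ j * ξ)).norm using 2 with N
  rw [norm_prod]
  refine Finset.prod_congr rfl fun m _ => ?_
  rw [Complex.norm_real, Real.norm_eq_abs, pow_add, pow_mul, mul_assoc]

theorem tprod_le_prod_of_le_one {ι : Type*} {f : ι → ℝ} (h0 : ∀ i, 0 ≤ f i) (h1 : ∀ i, f i ≤ 1)
    (t : Finset ι) : ∏' i, f i ≤ ∏ i ∈ t, f i := by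
  have hbdd : BddBelow (Set.range fun t : Finset ι => ∏ i ∈ t, f i) :=
    ⟨0, Set.forall_mem_range.2 fun t => Finset.prod_nonneg fun i _ => h0 i⟩
  have hprod : HasProd f (⨅ t : Finset ι, ∏ i ∈ t, f i) :=
    tendsto_atTop_ciInf (Finset.prod_anti_set_of_le_one h0 h1) hbdd
  exact hprod.tprod_eq ▸ ciInf_le hbdd t

theorem tprod_subtype_le_prod_of_le_one {ι : Type*} {f : ι → ℝ} (h0 : ∀ i, 0 ≤ f i)
    (h1 : ∀ i, f i ≤ 1) {s : Set ι} (t : Finset ι) (hts : ↑t ⊆ s) :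
    ∏' i : s, f i ≤ ∏ i ∈ t, f i := by
  classical
  calc ∏' i : s, f i ≤ ∏ i ∈ t.subtype (· ∈ s), f i :=
        tprod_le_prod_of_le_one (f := fun i : s => f i) (fun i => h0 i) (fun i => h1 i) _
    _ = ∏ i ∈ t, f i := by
        rw [Finset.prod_subtype_eq_prod_filter, Finset.filter_true_of_mem fun i hi => hts hi]

theorem tprod_subtype_le_mul_of_tendsto {ι : Type*} {f : ι → ℝ} (h0 : ∀ i, 0 ≤ f i)
    (h1 : ∀ i, f i ≤ 1) {s : Set ι} {u v : ℕ ↪ ι} (huv : ∀ m m', u m ≠ v m')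
    (hus : ∀ m, u m ∈ s) (hvs : ∀ m, v m ∈ s) {A B : ℝ}
    (hA : Tendsto (fun N => ∏ m ∈ Finset.range N, f (u m)) atTop (𝓝 A))
    (hB : Tendsto (fun N => ∏ m ∈ Finset.range N, f (v m)) atTop (𝓝 B)) :
    ∏' i : s, f i ≤ A * B := by
  classical
  refine ge_of_tendsto (hA.mul hB) (Eventually.of_forall fun N => ?_)
  have hdisj : Disjoint ((Finset.range N).map u) ((Finset.range N).map v) := by
    simp only [Finset.disjoint_left, Finset.mem_map]
    rintro _ ⟨m, -, rfl⟩ ⟨m', -, h⟩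
    exact huv m m' h.symm
  have hsub : ↑((Finset.range N).map u ∪ (Finset.range N).map v) ⊆ s := by
    simp only [Finset.coe_union, Finset.coe_map, Set.union_subset_iff, Set.image_subset_iff]
    exact ⟨fun m _ => hus m, fun m _ => hvs m⟩
  calc ∏' i : s, f i ≤ ∏ i ∈ (Finset.range N).map u ∪ (Finset.range N).map v, f i :=
        tprod_subtype_le_prod_of_le_one h0 h1 _ hsub
    _ = _ := by rw [Finset.prod_union hdisj, Finset.prod_map, Finset.prod_map]

/-- for any `λ ∈ (0,1)`, `ξ ∈ ℝ` and `n ∈ ℕ`,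
`∏_{k ≥ 0, k ≠ n} |cos(λᵏ ξ)| ≤ |μ̂_{λ³}(ξ)|² + |μ̂_{λ³}(λξ)|² + |μ̂_{λ³}(λ²ξ)|²`. -/
theorem prod_abs_cos_le_sum_sq_fourier
    (ν : Measure (ℕ → Bool)) (hν : IsBernoulliMeasure ν)
    (lam : ℝ) (hlam : lam ∈ Ioo (0 : ℝ) 1) (ξ : ℝ) (n : ℕ) :
    (∏' k : {k : ℕ // k ≠ n}, |Real.cos (lam ^ (k : ℕ) * ξ)|) ≤
      ‖FT (bc ν (lam ^ 3)) ξ‖ ^ 2 +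
        ‖FT (bc ν (lam ^ 3)) (lam * ξ)‖ ^ 2 +
        ‖FT (bc ν (lam ^ 3)) (lam ^ 2 * ξ)‖ ^ 2 := by
  have hlam_abs : |lam| < 1 := abs_lt.2 ⟨by linarith [hlam.1], hlam.2⟩
  set A : ℕ → ℝ := fun j => ‖FT (bc ν (lam ^ 3)) (lam ^ j * ξ)‖
  have hpair (j j' : ℕ) (hj : j < 3) (hj' : j' < 3) (hjj' : j ≠ j') (hjn : j ≠ n % 3)
      (hj'n : j' ≠ n % 3) :
      (∏' k : {k : ℕ // k ≠ n}, |Real.cos (lam ^ (k : ℕ) * ξ)|) ≤ A j * A j' := by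
    refine tprod_subtype_le_mul_of_tendsto (f := fun k => |Real.cos (lam ^ k * ξ)|)
      (s := {k | k ≠ n}) (u := ⟨(3 * · + j), ?_⟩) (v := ⟨(3 * · + j'), ?_⟩)
      (fun k => abs_nonneg _) (fun k => Real.abs_cos_le_one _) ?_ ?_ ?_
      (hν.tendsto_prod_abs_cos_norm_FT_bc hlam_abs three_ne_zero j ξ)
      (hν.tendsto_prod_abs_cos_norm_FT_bc hlam_abs three_ne_zero j' ξ)
    · intro m m' h; simp only at h; omega
    · intro m m' h; simp only at h; omega
    · exact fun m m' => show 3 * m + j ≠ 3 * m' + j' by omega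
    · exact fun m => show 3 * m + j ≠ n by omega
    · exact fun m => show 3 * m + j' ≠ n by omega
  have hA0 : ‖FT (bc ν (lam ^ 3)) ξ‖ = A 0 := by simp [A]
  have hA1 : ‖FT (bc ν (lam ^ 3)) (lam * ξ)‖ = A 1 := by simp [A]
  rw [hA0, hA1]
  rcases (by omega : n % 3 = 0 ∨ n % 3 = 1 ∨ n % 3 = 2) with h | h | h
  · nlinarith [hpair 1 2 (by omega) (by omega) (by omega) (by omega) (by omega),
      sq_nonneg (A 1 - A 2), sq_nonneg (A 0)]
  · nlinarith [hpair 0 2 (by omega) (by omega) (by omega) (by omega) (by omega),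
      sq_nonneg (A 0 - A 2), sq_nonneg (A 1)]
  · nlinarith [hpair 0 1 (by omega) (by omega) (by omega) (by omega) (by omega),
      sq_nonneg (A 0 - A 1), sq_nonneg (A 2)]

end
end

section
/- For any δ ∈ (0,1/2) there exists δ' > 0 such that for every λ ∈ (δ, 1-δ) and every sequence a = (a₁,a₂,…) ∈ {-1,1}^ℕ: if X(λ;a) = Σ_{m≥1} a_m λ^{m-1} > 1/(1-λ) - δ', then X⁽¹⁾(λ;a) = Σ_{m≥1} m a_{m+1} λ^{m-1} > 1/2. -/
open Set Filter

/-- for any `δ ∈ (0,1/2)` there exists `δ' > 0` such that for every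
`λ ∈ (δ, 1-δ)` and every sign sequence `a ∈ {-1,1}^ℕ` (here `a k` codes `a_{k+1}`):
if `X(λ;a) = Σ_{m≥1} a_m λ^{m-1} > 1/(1-λ) - δ'` then
`X⁽¹⁾(λ;a) = Σ_{m≥1} m a_{m+1} λ^{m-1} > 1/2`. -/
theorem deriv_large_when_X_near_max
    (δ : ℝ) (hδ : δ ∈ Ioo (0 : ℝ) (1 / 2)) :
    ∃ δ' > (0 : ℝ), ∀ lam ∈ Ioo δ (1 - δ), ∀ a : ℕ → ℝ,
      (∀ k, a k = 1 ∨ a k = -1) →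
      (∑' k : ℕ, a k * lam ^ k) > 1 / (1 - lam) - δ' →
      (∑' k : ℕ, ((k : ℝ) + 1) * a (k + 1) * lam ^ k) > 1 / 2 := by
  obtain ⟨hδ0, hδ2⟩ := hδ
  have hδ1' : (0:ℝ) < 1 - δ := by linarith
  have hδ1 : (1:ℝ) - δ < 1 := by linarith
  set f : ℕ → ℝ := fun k => ((k:ℝ)+1)*(1-δ)^k with hfdef
  have hfs : Summable f := by
    have h1 : Summable (fun k:ℕ => (k:ℝ)*(1-δ)^k) := by
      simpa using summable_pow_mul_geometric_of_norm_lt_one (R := ℝ) (r := 1-δ) 1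
        (by rw [Real.norm_eq_abs, abs_of_pos hδ1']; exact hδ1)
    have h2 : Summable (fun k:ℕ => (1-δ)^k) := summable_geometric_of_lt_one hδ1'.le hδ1
    have := h1.add h2
    simpa [hfdef, add_mul, one_mul] using this
  obtain ⟨M, hM⟩ : ∃ M, (∑' k, f (k + M)) < 1/4 := by
    have h := tendsto_sum_nat_add f
    have := (h.eventually (gt_mem_nhds (by norm_num : (0:ℝ) < 1/4))).exists
    exact this
  refine ⟨2*δ^M, by positivity, ?_⟩
  rintro lam ⟨hl1, hl2⟩ a ha hX
  have hlam0 : 0 < lam := lt_trans hδ0 hl1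
  have hlam1 : lam < 1 := by linarith
  have ha1 : ∀ k, a k ≤ 1 := fun k => by rcases ha k with h | h <;> rw [h] <;> norm_num
  have ha2 : ∀ k, -1 ≤ a k := fun k => by rcases ha k with h | h <;> rw [h] <;> norm_num
  have hgeo : Summable (fun k:ℕ => lam ^ k) := summable_geometric_of_lt_one hlam0.le hlam1
  have hh : Summable (fun k:ℕ => ((k:ℝ)+1) * lam ^ k) := by
    have h1 : Summable (fun k:ℕ => (k:ℝ)*lam^k) := by
      simpa using summable_pow_mul_geometric_of_norm_lt_one (R := ℝ) (r := lam) 1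
        (by rw [Real.norm_eq_abs, abs_of_pos hlam0]; exact hlam1)
    have := h1.add hgeo
    simpa [add_mul, one_mul] using this
  have hXs : Summable (fun k => a k * lam ^ k) := by
    refine Summable.of_abs (hgeo.of_nonneg_of_le (fun k => abs_nonneg _) (fun k => ?_))
    rw [abs_mul, abs_pow, abs_of_pos hlam0]
    have : |a k| = 1 := by rcases ha k with h | h <;> rw [h] <;> norm_num
    rw [this, one_mul]
  -- Step 1: the first M+1 signs are +1
  have hone : ∀ j, j ≤ M → a j = 1 := by
    intro j hj
    rcases ha j with h | h
    · exact h
    exfalso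
    have hsub : Summable (fun k => (1 - a k) * lam ^ k) := by
      have := hgeo.sub hXs
      simpa [sub_mul, one_mul] using this
    have hterm : (1 - a j) * lam ^ j ≤ ∑' k, (1 - a k) * lam ^ k := by
      refine Summable.le_tsum hsub j (fun i _ => ?_)
      have := ha1 i
      have := pow_nonneg hlam0.le i
      nlinarith
    have hsplit : ∑' k, (1 - a k) * lam ^ k
        = (∑' k:ℕ, lam ^ k) - ∑' k, a k * lam ^ k := by
      rw [← Summable.tsum_sub hgeo hXs]
      congr 1; funext k; ring
    have hgs : ∑' k:ℕ, lam ^ k = 1 / (1 - lam) := by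
      rw [tsum_geometric_of_lt_one hlam0.le hlam1, one_div]
    have hjM : lam ^ M ≤ lam ^ j := pow_le_pow_of_le_one hlam0.le hlam1.le hj
    have hδM : δ ^ M ≤ lam ^ M := pow_le_pow_left₀ hδ0.le hl1.le M
    have hpj : (1 - a j) * lam ^ j = 2 * lam ^ j := by rw [h]; ring
    rw [hpj] at hterm
    rw [hsplit, hgs] at hterm
    nlinarith
  -- Step 2: bound the derivative sum
  set d : ℕ → ℝ := fun k => (1 - a (k+1)) * (((k:ℝ)+1) * lam ^ k) with hddef
  have hd0 : ∀ k, 0 ≤ d k := by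
    intro k
    have h1 := ha1 (k+1)
    have h2 : (0:ℝ) ≤ ((k:ℝ)+1) * lam ^ k := by positivity
    have : 0 ≤ 1 - a (k+1) := by linarith
    exact mul_nonneg this h2
  have hdle : ∀ k, d k ≤ 2 * (((k:ℝ)+1) * lam ^ k) := by
    intro k
    have h2 := ha2 (k+1)
    have h3 : (0:ℝ) ≤ ((k:ℝ)+1) * lam ^ k := by positivity
    have : 1 - a (k+1) ≤ 2 := by linarith
    exact mul_le_mul_of_nonneg_right this h3
  have hds : Summable d := Summable.of_nonneg_of_le hd0 hdle (hh.mul_left 2)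
  have hsum_eq : (∑' k : ℕ, ((k : ℝ) + 1) * a (k + 1) * lam ^ k)
      = (∑' k:ℕ, ((k:ℝ)+1) * lam ^ k) - ∑' k, d k := by
    rw [← Summable.tsum_sub hh hds]
    congr 1; funext k; simp only [hddef]; ring
  have hh1 : (1:ℝ) ≤ ∑' k:ℕ, ((k:ℝ)+1) * lam ^ k := by
    have := Summable.le_tsum hh 0 (fun i _ => by positivity)
    simpa using this
  have hdzero : ∀ k < M, d k = 0 := by
    intro k hk
    have : a (k+1) = 1 := hone (k+1) hk
    simp [hddef, this]
  have hdsplit : ∑' k, d k = ∑' k, d (k + M) := by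
    rw [← Summable.sum_add_tsum_nat_add M hds,
      Finset.sum_eq_zero (fun i hi => hdzero i (Finset.mem_range.mp hi)), zero_add]
  have htails : Summable (fun k => d (k + M)) := (summable_nat_add_iff M).2 hds
  have hftails : Summable (fun k => 2 * f (k + M)) :=
    ((summable_nat_add_iff M).2 hfs).mul_left 2
  have hdbound : ∑' k, d (k + M) ≤ ∑' k, 2 * f (k + M) := by
    refine Summable.tsum_le_tsum (fun k => ?_) htails hftails
    have h1 := hdle (k + M)
    have h2 : lam ^ (k + M) ≤ (1-δ) ^ (k + M) := pow_le_pow_left₀ hlam0.le hl2.le _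
    have h3 : (0:ℝ) ≤ ((k:ℝ) + (M:ℝ) + 1) := by positivity
    calc d (k + M) ≤ 2 * ((((k+M:ℕ):ℝ)+1) * lam ^ (k+M)) := h1
      _ ≤ 2 * ((((k+M:ℕ):ℝ)+1) * (1-δ) ^ (k+M)) := by
          push_cast
          nlinarith
      _ = 2 * f (k + M) := by rw [hfdef]
  have hdsmall : ∑' k, d k < 1/2 := by
    rw [hdsplit]
    have : ∑' k, 2 * f (k + M) = 2 * ∑' k, f (k + M) := tsum_mul_left
    calc ∑' k, d (k + M) ≤ ∑' k, 2 * f (k + M) := hdbound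
      _ = 2 * ∑' k, f (k + M) := this
      _ < 2 * (1/4) := by linarith
      _ = 1/2 := by norm_num
  rw [hsum_eq]
  linarith
end

section
/- Let h : (a,b) → ℝ and suppose h_n : (a,b) → ℝ is a sequence of differentiable functions with h_n'(t) ≥ 0 for all n and all t ∈ (a,b), such that h(t) = Σ_n h_n(t) converges absolutely for each t. If Σ_n h_n'(λ₀) = ∞ for some λ₀ ∈ (a,b), then liminf_{ε→0} (h(λ₀+ε) − h(λ₀))/ε = ∞; in particular h is not differentiable at λ₀. -/
open Set Filter

/-- if `h_n` are differentiable on `(a,b)` with nonnegative derivatives,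
`H t = Σ_n h_n t` converges absolutely on `(a,b)`, and `Σ_n h_n'(l₀) = ∞` at some
`l₀ ∈ (a,b)`, then the difference quotients of `H` at `l₀` tend to `+∞`
(i.e. `liminf_{ε→0} (H(l₀+ε) - H(l₀))/ε = ∞`); in particular `H` is not
differentiable at `l₀`. -/
theorem not_differentiable_of_sum_deriv_infinite
    (a b : ℝ) (hab : a < b) (h : ℕ → ℝ → ℝ) (H : ℝ → ℝ) (l₀ : ℝ) (hl₀ : l₀ ∈ Ioo a b)
    (hdiff : ∀ n : ℕ, ∀ t ∈ Ioo a b, DifferentiableAt ℝ (h n) t)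
    (hpos : ∀ n : ℕ, ∀ t ∈ Ioo a b, 0 ≤ deriv (h n) t)
    (habs : ∀ t ∈ Ioo a b, Summable fun n => |h n t|)
    (hH : ∀ t ∈ Ioo a b, HasSum (fun n => h n t) (H t))
    (hdiv : ¬ Summable fun n => deriv (h n) l₀) :
    (Tendsto (fun ε : ℝ => (H (l₀ + ε) - H l₀) / ε) (nhdsWithin 0 {0}ᶜ) atTop) ∧
      ¬ ∃ L : ℝ, HasDerivAt H L l₀ := by
  obtain ⟨hal, hlb⟩ := hl₀
  have hl₀' : l₀ ∈ Ioo a b := ⟨hal, hlb⟩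
  -- each h n is monotone on Ioo a b
  have hmono : ∀ n, MonotoneOn (h n) (Ioo a b) := by
    intro n
    apply monotoneOn_of_deriv_nonneg (convex_Ioo a b)
    · exact fun t ht => (hdiff n t ht).continuousAt.continuousWithinAt
    · rw [interior_Ioo]
      exact fun t ht => (hdiff n t ht).differentiableWithinAt
    · rw [interior_Ioo]
      exact fun t ht => hpos n t ht
  -- map lemma
  have hmap : Tendsto (fun ε : ℝ => l₀ + ε) (nhdsWithin 0 {0}ᶜ) (nhdsWithin l₀ {l₀}ᶜ) := by
    apply tendsto_nhdsWithin_of_tendsto_nhds_of_eventually_within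
    · have : Tendsto (fun ε : ℝ => l₀ + ε) (nhds 0) (nhds (l₀ + 0)) :=
        tendsto_const_nhds.add tendsto_id
      simpa using this.mono_left nhdsWithin_le_nhds
    · filter_upwards [self_mem_nhdsWithin] with ε hε
      simp only [mem_compl_iff, mem_singleton_iff] at hε ⊢
      intro hc
      exact hε (by linarith)
  -- the main tendsto
  have hT : Tendsto (fun ε : ℝ => (H (l₀ + ε) - H l₀) / ε) (nhdsWithin 0 {0}ᶜ) atTop := by
    rw [tendsto_atTop]
    intro M
    -- find finite partial sum of derivatives exceeding M
    have hD0 : ∀ n, 0 ≤ deriv (h n) l₀ := fun n => hpos n l₀ hl₀'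
    have htend := (not_summable_iff_tendsto_nat_atTop_of_nonneg hD0).1 hdiv
    obtain ⟨N, hN⟩ := (htend.eventually (eventually_gt_atTop M)).exists
    set S : Finset ℕ := Finset.range N with hS
    -- finite sum of slopes tends to the finite sum of derivatives
    have hfin : Tendsto (fun ε : ℝ => ∑ n ∈ S, (h n (l₀ + ε) - h n l₀) / ε)
        (nhdsWithin 0 {0}ᶜ) (nhds (∑ n ∈ S, deriv (h n) l₀)) := by
      apply tendsto_finset_sum
      intro n _
      have hd := (hdiff n l₀ hl₀').hasDerivAt
      have hslope := hasDerivAt_iff_tendsto_slope.1 hd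
      have := hslope.comp hmap
      apply this.congr
      intro ε
      simp [Function.comp, slope_def_field, add_sub_cancel_left]
    have hev : ∀ᶠ ε in nhdsWithin (0:ℝ) {0}ᶜ, M < ∑ n ∈ S, (h n (l₀ + ε) - h n l₀) / ε :=
      hfin.eventually (eventually_gt_nhds hN)
    have hmem : ∀ᶠ ε in nhdsWithin (0:ℝ) {0}ᶜ, l₀ + ε ∈ Ioo a b := by
      apply eventually_nhdsWithin_of_eventually_nhds
      have : Ioo (a - l₀) (b - l₀) ∈ nhds (0:ℝ) :=
        Ioo_mem_nhds (by linarith) (by linarith)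
      filter_upwards [this] with ε hε
      exact ⟨by linarith [hε.1], by linarith [hε.2]⟩
    filter_upwards [hev, hmem, self_mem_nhdsWithin] with ε hε hεmem hε0
    have hε0' : ε ≠ 0 := by simpa using hε0
    -- each slope is nonnegative
    have hnn : ∀ n, 0 ≤ (h n (l₀ + ε) - h n l₀) / ε := by
      intro n
      rcases lt_or_gt_of_ne hε0' with hneg | hposε
      · apply div_nonneg_iff.2
        refine Or.inr ⟨?_, le_of_lt hneg⟩
        have := hmono n hεmem hl₀' (by linarith)
        linarith
      · apply div_nonneg
        · have := hmono n hl₀' hεmem (by linarith)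
          linarith
        · linarith
    -- full sum
    have hsum : HasSum (fun n => (h n (l₀ + ε) - h n l₀) / ε)
        ((H (l₀ + ε) - H l₀) / ε) := ((hH _ hεmem).sub (hH l₀ hl₀')).div_const ε
    have hle : ∑ n ∈ S, (h n (l₀ + ε) - h n l₀) / ε ≤ (H (l₀ + ε) - H l₀) / ε :=
      sum_le_hasSum S (fun n _ => hnn n) hsum
    linarith [hε]
  refine ⟨hT, ?_⟩
  rintro ⟨L, hL⟩
  have hslope := hasDerivAt_iff_tendsto_slope.1 hL
  have hcomp : Tendsto (fun ε : ℝ => (H (l₀ + ε) - H l₀) / ε) (nhdsWithin 0 {0}ᶜ)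
      (nhds L) := by
    apply (hslope.comp hmap).congr
    intro ε
    simp [Function.comp, slope_def_field, add_sub_cancel_left]
  exact not_tendsto_atTop_of_tendsto_nhds hcomp hT
end
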